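/- arXiv:1902.03297 — 3 statements merged into one kernel-verified Lean document; each statement's English description precedes it below -/
import Mathlib

section
/- Let F be a decomposable family with junction tree T, and let p be the maximum likelihood distribution in the corresponding exponential model. Then the negative normalized log-likelihood of the data equals the sum over maximal itemsets X of the empirical entropy H(X), minus the sum over edges (X,Y) of the junction tree of the empirical entropy H(X∩Y). That is, −log P(D|M,r*)/|D| = Σ_{X ∈ max(F)} H(X) − Σ_{(X,Y) ∈ E(T)} H(X∩Y). -/
open scoped Classical

variable {A : Type*} [Fintype A] [DecidableEq A]

/-- A family of itemsets is downward closed if it is closed under taking subsets. -/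
def DownwardClosed (F : Finset (Finset A)) : Prop :=
  ∀ X ∈ F, ∀ Y ⊆ X, Y ∈ F

/-- The maximal itemsets of a family. -/
def maximalSets (F : Finset (Finset A)) : Finset (Finset A) :=
  F.filter fun X => ∀ Y ∈ F, X ⊆ Y → X = Y

/-- A junction tree for a family `F`: a tree on the maximal itemsets of `F` such that
for any two nodes sharing an item `a`, every node on the (unique) path between them
contains `a` (running intersection property). -/
def IsJunctionTree (F : Finset (Finset A))
    (G : SimpleGraph {X // X ∈ maximalSets F}) : Prop :=
  G.IsTree ∧
    ∀ (X Y : {X // X ∈ maximalSets F}) (a : A), a ∈ X.1 → a ∈ Y.1 →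
      ∀ (p : G.Walk X Y), p.IsPath → ∀ Z ∈ p.support, a ∈ Z.1

/-- A family is decomposable if it admits a junction tree. -/
def Decomposable (F : Finset (Finset A)) : Prop :=
  ∃ G : SimpleGraph {X // X ∈ maximalSets F}, IsJunctionTree F G

/-- The collection {X − S : X ∈ max(F), S ⊊ X}. -/
def baseFam (F : Finset (Finset A)) (S : Finset A) : Finset (Finset A) :=
  ((maximalSets F).filter fun X => S ⊂ X).image fun X => X \ S

/-- The union of the connected component of `U` in the intersection graph on `baseFam F S`. -/
noncomputable def component (F : Finset (Finset A)) (S U : Finset A) : Finset A :=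
  ((baseFam F S).filter fun V =>
      Relation.ReflTransGen
        (fun P Q => P ∈ baseFam F S ∧ Q ∈ baseFam F S ∧ (P ∩ Q).Nonempty) U V).sup id

/-- The reduced family R(F;S): obtained from {X − S : X ∈ max(F), S ⊊ X} by repeatedly
replacing intersecting members by their union until all members are pairwise disjoint;
equivalently, the unions of the connected components of the intersection graph. -/
noncomputable def reducedFamily (F : Finset (Finset A)) (S : Finset A) : Set (Finset A) :=
  {Z | ∃ U ∈ baseFam F S, Z = component F S U}

variable {K : ℕ}

/-- The frequency of itemset `X` under distribution `p`: the probability that all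
items of `X` take value `true`. -/
noncomputable def freq (p : (Fin K → Bool) → ℝ) (X : Finset (Fin K)) : ℝ :=
  ∑ t ∈ Finset.univ.filter (fun t : Fin K → Bool => ∀ i ∈ X, t i = true), p t

/-- `p` is a probability distribution on `{0,1}^K`. -/
def IsDist (p : (Fin K → Bool) → ℝ) : Prop :=
  (∀ t, 0 ≤ p t) ∧ ∑ t, p t = 1

/-- The empirical distribution of a dataset `D`. -/
noncomputable def empirical (D : Multiset (Fin K → Bool)) : (Fin K → Bool) → ℝ :=
  fun t => (D.count t : ℝ) / (Multiset.card D : ℝ)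

/-- The likelihood of a dataset `D` under distribution `p`. -/
noncomputable def likelihood (p : (Fin K → Bool) → ℝ) (D : Multiset (Fin K → Bool)) : ℝ :=
  (D.map p).prod

/-- The (Shannon) entropy of a distribution. -/
noncomputable def entropyDist (p : (Fin K → Bool) → ℝ) : ℝ :=
  -∑ t, p t * Real.log (p t)

/-- Indicator `S_X(t)`: 1 if transaction `t` covers itemset `X`, else 0. -/
def ind (X : Finset (Fin K)) (t : Fin K → Bool) : ℝ :=
  if ∀ i ∈ X, t i = true then 1 else 0

/-- `p` has the exponential form associated with family `F`. -/
def ExpForm (F : Finset (Finset (Fin K))) (p : (Fin K → Bool) → ℝ) : Prop :=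
  ∃ r : Finset (Fin K) → ℝ, ∀ t, p t = Real.exp (∑ X ∈ F, r X * ind X t)

/-- The exponential model associated with `F`: distributions of exponential form
together with all their limits. -/
def ExpModel (F : Finset (Finset (Fin K))) : Set ((Fin K → Bool) → ℝ) :=
  closure {p | ExpForm F p}

/-- `p` matches the frequencies of `q` on every itemset of `F`. -/
def Matches (F : Finset (Finset (Fin K))) (p q : (Fin K → Bool) → ℝ) : Prop :=
  ∀ X ∈ F, freq p X = freq q X

/-- The marginal probability under `p` of observing the values of `t` on the
coordinates of `X`. -/
noncomputable def marg (p : (Fin K → Bool) → ℝ) (X : Finset (Fin K)) (t : Fin K → Bool) : ℝ :=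
  ∑ s ∈ Finset.univ.filter (fun s : Fin K → Bool => ∀ i ∈ X, s i = t i), p s

/-- The empirical entropy of an itemset `X` under distribution `q`. -/
noncomputable def entropyOf (q : (Fin K → Bool) → ℝ) (X : Finset (Fin K)) : ℝ :=
  -∑ u : {i // i ∈ X} → Bool,
      (marg q X fun i => if h : i ∈ X then u ⟨i, h⟩ else false) *
        Real.log (marg q X fun i => if h : i ∈ X then u ⟨i, h⟩ else false)

/-- Kullback–Leibler divergence. -/
noncomputable def KLdiv (p q : (Fin K → Bool) → ℝ) : ℝ :=
  ∑ t, p t * Real.log (p t / q t)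

/-!
Wherever the data has positive mass, the factorization splits `log p` into the log-marginals
of the maximal sets minus those of the separators. The separators lie in `F` by downward
closure, so `p` may be replaced by the empirical distribution `q` in every marginal, and
averaging `log (marg q X)` against `q` itself yields `-H(X)`.
-/

section Marginals

open Finset Real

def extendByFalse (X : Finset (Fin K)) (u : X → Bool) : Fin K → Bool :=
  fun i => if h : i ∈ X then u ⟨i, h⟩ else false

lemma marg_congr (q : (Fin K → Bool) → ℝ) (X : Finset (Fin K)) {t t' : Fin K → Bool}
    (h : ∀ i ∈ X, t i = t' i) : marg q X t = marg q X t' := by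
  unfold marg
  congr 1
  exact filter_congr fun s _ => forall₂_congr fun i hi => by rw [h i hi]

lemma le_marg {q : (Fin K → Bool) → ℝ} (hq : ∀ t, 0 ≤ q t) (X : Finset (Fin K))
    (t : Fin K → Bool) : q t ≤ marg q X t :=
  single_le_sum (fun s _ => hq s) (by simp)

lemma sum_mul_eq_sum_marg_extendByFalse (q : (Fin K → Bool) → ℝ) (X : Finset (Fin K))
    (g : (Fin K → Bool) → ℝ) (hg : ∀ t t', (∀ i ∈ X, t i = t' i) → g t = g t') :
    ∑ t, q t * g t = ∑ u : X → Bool, marg q X (extendByFalse X u) * g (extendByFalse X u) := by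
  rw [← sum_fiberwise univ (fun t (i : X) => t i) (fun t => q t * g t)]
  refine sum_congr rfl fun u _ => ?_
  have hfiber : ∀ t : Fin K → Bool,
      (fun i : X => t i) = u ↔ ∀ i ∈ X, t i = extendByFalse X u i := by
    refine fun t => ⟨fun h i hi => by simp [extendByFalse, hi, ← h], fun h => ?_⟩
    funext i
    simpa [extendByFalse] using h i i.2
  rw [filter_congr fun t _ => hfiber t, marg, sum_mul]
  exact sum_congr rfl fun t ht => by rw [hg t _ (mem_filter.mp ht).2]

lemma sum_mul_log_marg (q : (Fin K → Bool) → ℝ) (X : Finset (Fin K)) :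
    ∑ t, q t * log (marg q X t) = -entropyOf q X := by
  rw [sum_mul_eq_sum_marg_extendByFalse q X _ fun t t' h => by rw [marg_congr q X h], entropyOf,
    neg_neg]
  rfl

lemma empirical_nonneg (D : Multiset (Fin K → Bool)) (t : Fin K → Bool) :
    0 ≤ empirical D t := by
  unfold empirical
  positivity

lemma empirical_pos {D : Multiset (Fin K → Bool)} {t : Fin K → Bool} (ht : t ∈ D) :
    0 < empirical D t := by
  have hcount : 0 < D.count t := Multiset.count_pos.mpr ht
  have hcard : 0 < Multiset.card D := hcount.trans_le (Multiset.count_le_card t D)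
  unfold empirical
  positivity

lemma log_likelihood_div_card (p : (Fin K → Bool) → ℝ) (D : Multiset (Fin K → Bool))
    (hp : ∀ t ∈ D, p t ≠ 0) :
    log (likelihood p D) / Multiset.card D = ∑ t, empirical D t * log (p t) := by
  have hsupp : ∀ t ∉ D.toFinset, (D.count t : ℝ) * log (p t) = 0 := fun t ht => by
    simp [Multiset.count_eq_zero.mpr (by simpa using ht)]
  rw [likelihood, prod_multiset_map_count,
    log_prod fun t ht => pow_ne_zero _ (hp t (Multiset.mem_toFinset.mp ht))]
  simp only [log_pow]
  rw [sum_subset (subset_univ _) fun t _ ht => hsupp t ht, sum_div]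
  exact sum_congr rfl fun t _ => by rw [empirical]; ring

section Factorization

variable {ι κ : Type*} {q p : (Fin K → Bool) → ℝ} (hq : ∀ t, 0 ≤ q t)
  {I : Finset ι} {S : ι → Finset (Fin K)} {J : Finset κ} {T : κ → Finset (Fin K)}
include hq

lemma pos_of_eq_prod_marg_div {t : Fin K → Bool} (ht : 0 < q t)
    (hfact : p t = (∏ i ∈ I, marg q (S i) t) / ∏ j ∈ J, marg q (T j) t) : 0 < p t := by
  rw [hfact]
  exact div_pos (prod_pos fun i _ => ht.trans_le (le_marg hq _ t))
    (prod_pos fun j _ => ht.trans_le (le_marg hq _ t))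

lemma mul_log_eq_of_eq_prod_marg_div {t : Fin K → Bool}
    (hfact : p t = (∏ i ∈ I, marg q (S i) t) / ∏ j ∈ J, marg q (T j) t) :
    q t * log (p t) =
      ∑ i ∈ I, q t * log (marg q (S i) t) - ∑ j ∈ J, q t * log (marg q (T j) t) := by
  rcases (hq t).eq_or_lt with h | h
  · simp [← h]
  have hmarg : ∀ X, marg q X t ≠ 0 := fun X => (h.trans_le (le_marg hq X t)).ne'
  rw [hfact, log_div (prod_ne_zero_iff.mpr fun i _ => hmarg _)
    (prod_ne_zero_iff.mpr fun j _ => hmarg _), log_prod fun i _ => hmarg _,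
    log_prod fun j _ => hmarg _, mul_sub, mul_sum, mul_sum]

lemma neg_sum_mul_log_eq_of_eq_prod_marg_div
    (hfact : ∀ t, p t = (∏ i ∈ I, marg q (S i) t) / ∏ j ∈ J, marg q (T j) t) :
    -∑ t, q t * log (p t) = ∑ i ∈ I, entropyOf q (S i) - ∑ j ∈ J, entropyOf q (T j) := by
  rw [sum_congr rfl fun t _ => mul_log_eq_of_eq_prod_marg_div hq (hfact t), sum_sub_distrib,
    sum_comm, sum_comm (s := univ)]
  simp only [sum_mul_log_marg, sum_neg_distrib]
  ring

end Factorization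

def separator {M : Finset (Finset (Fin K))} (e : Sym2 M) : Finset (Fin K) :=
  Sym2.lift ⟨fun X Y => X.1 ∩ Y.1, fun _ _ => inter_comm _ _⟩ e

lemma lift_inter_eq_separator {β : Type*} {M : Finset (Finset (Fin K))}
    (g : Finset (Fin K) → β) (hg : ∀ X Y : M, g (X.1 ∩ Y.1) = g (Y.1 ∩ X.1)) (e : Sym2 M) :
    Sym2.lift ⟨fun X Y => g (X.1 ∩ Y.1), hg⟩ e = g (separator e) := by
  induction e using Sym2.inductionOn
  rfl

lemma separator_mem {F : Finset (Finset (Fin K))} (hdc : DownwardClosed F)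
    (e : Sym2 (maximalSets F)) : separator e ∈ F := by
  induction e using Sym2.inductionOn with
  | hf X Y => exact hdc _ (filter_subset _ _ X.2) _ inter_subset_left

end Marginals

/-- Theorem: for a decomposable family `F` with junction tree `G`, the maximum likelihood
distribution `p` (which factorizes over the junction tree and agrees with the empirical
distribution on the marginals of every itemset of `F`) satisfies
`−log P(D | M, r*) / |D| = Σ_{X ∈ max(F)} H(X) − Σ_{(X,Y) ∈ E(T)} H(X ∩ Y)`. -/
theorem decomposable_max_loglikelihood (F : Finset (Finset (Fin K)))
    (hdc : DownwardClosed F)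
    (G : SimpleGraph {X // X ∈ maximalSets F}) [Fintype G.edgeSet]
    (D : Multiset (Fin K → Bool))
    (p : (Fin K → Bool) → ℝ)
    (hfact : ∀ t, p t =
      (∏ X ∈ maximalSets F, marg p X t) /
        ∏ e ∈ G.edgeFinset,
          Sym2.lift ⟨fun X Y => marg p (X.1 ∩ Y.1) t,
            fun X Y => by simp [Finset.inter_comm]⟩ e)
    (hagree : ∀ X ∈ F, ∀ t, marg p X t = marg (empirical D) X t) :
    -(Real.log (likelihood p D)) / (Multiset.card D : ℝ) =
      (∑ X ∈ maximalSets F, entropyOf (empirical D) X) -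
        ∑ e ∈ G.edgeFinset,
          Sym2.lift ⟨fun X Y => entropyOf (empirical D) (X.1 ∩ Y.1),
            fun X Y => by simp [Finset.inter_comm]⟩ e := by
  have hfact_emp : ∀ t, p t = (∏ X ∈ maximalSets F, marg (empirical D) X t) /
      ∏ e ∈ G.edgeFinset, marg (empirical D) (separator e) t := fun t => by
    rw [hfact t]
    congr 1 <;> refine Finset.prod_congr rfl fun e he => ?_
    · exact hagree _ (Finset.filter_subset _ _ he) t
    · rw [lift_inter_eq_separator (fun S => marg p S t)]
      exact hagree _ (separator_mem hdc e) t
  have hpos : ∀ t ∈ D, p t ≠ 0 := fun t ht =>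
    (pos_of_eq_prod_marg_div (empirical_nonneg D) (empirical_pos ht) (hfact_emp t)).ne'
  rw [neg_div, log_likelihood_div_card p D hpos,
    Finset.sum_congr rfl fun e _ => lift_inter_eq_separator (entropyOf (empirical D)) _ e]
  exact neg_sum_mul_log_eq_of_eq_prod_marg_div (empirical_nonneg D) hfact_emp
end

section
/- Let F be a decomposable family of itemsets, X a maximal itemset of F, and x, y ∈ X distinct items. The family obtained by the split operation split(X,x,y) — deleting from F every itemset that contains both x and y — is decomposable if and only if X is the only maximal itemset of F containing both x and y. -/
open scoped Classical

variable {A : Type*} [Fintype A] [DecidableEq A]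

/-!
The median of three vertices of a tree lies on the three paths between them, so under the
running intersection property its label contains the pairwise intersections of their labels.

If a maximal `Y ≠ X` also contains `x` and `y`, no node of a junction tree of the split family
carries both. For nodes `M₁ ⊇ X - x`, `M₂ ⊇ X - y`, `M₃ ⊇ Y - x`, `M₄ ⊇ Y - y`, the median of
`M₁, M₃, M₂` carries `y` and lies on the paths from `M₁` to `M₂` and from `M₃` to `M₄`, so it
contains `(X ∪ Y) - x`, which therefore lies in `F`. But in a junction tree of `F`, the median
of `X`, `Y` and a maximal set containing `(X ∪ Y) - x` contains `X ∪ Y`, contradicting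
maximality.

Conversely, if `X` is the only maximal set containing `x` and `y`, root a junction tree of `F`
at `X`, relabel `X` as `X - x`, and give it a new child `X - y` adopting the children of `X` that
contain `x`. This tree is labelled by members of the split family, has the running intersection
property and has every maximal set of the split family among its labels; contracting each node
whose label is not maximal, or is repeated, into a neighbour containing it yields a junction
tree.
-/

namespace SimpleGraph

variable {V V' α : Type*} {G : SimpleGraph V}

def RunningIntersection (G : SimpleGraph V) (L : V → Finset α) : Prop :=
  ∀ (u v : V) (a : α), a ∈ L u → a ∈ L v → ∀ p : G.Walk u v, p.IsPath → ∀ z ∈ p.support, a ∈ L z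

namespace IsTree

variable (hG : G.IsTree) {u v w m z : V}
include hG

noncomputable def path (u v : V) : G.Walk u v :=
  (hG.existsUnique_path u v).choose

lemma isPath_path (u v : V) : (hG.path u v).IsPath :=
  (hG.existsUnique_path u v).choose_spec.1

lemma eq_path {p : G.Walk u v} (hp : p.IsPath) : p = hG.path u v :=
  (hG.existsUnique_path u v).choose_spec.2 p hp

lemma support_path_subset (p : G.Walk u v) : (hG.path u v).support ⊆ p.support := by
  rw [← hG.eq_path p.bypass_isPath]
  exact p.support_bypass_subset_support

lemma support_path_subset_left (hm : m ∈ (hG.path u v).support) :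
    (hG.path u m).support ⊆ (hG.path u v).support :=
  List.Subset.trans (hG.support_path_subset _) (Walk.support_takeUntil_subset_support _ hm)

lemma support_path_subset_right (hm : m ∈ (hG.path u v).support) :
    (hG.path m v).support ⊆ (hG.path u v).support :=
  List.Subset.trans (hG.support_path_subset _) (Walk.support_dropUntil_subset_support _ hm)

lemma mem_path_or_mem_path (v : V) (hz : z ∈ (hG.path u w).support) :
    z ∈ (hG.path u v).support ∨ z ∈ (hG.path v w).support := by
  simpa [Walk.mem_support_append_iff] using
    hG.support_path_subset ((hG.path u v).append (hG.path v w)) hz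

lemma length_path_add (hm : m ∈ (hG.path u v).support) :
    (hG.path u m).length + (hG.path m v).length = (hG.path u v).length := by
  have hsplit := congrArg Walk.length ((hG.path u v).take_spec hm)
  rwa [Walk.length_append, hG.eq_path ((hG.isPath_path u v).takeUntil hm),
    hG.eq_path ((hG.isPath_path u v).dropUntil hm)] at hsplit

lemma exists_median (a b c : V) : ∃ m, m ∈ (hG.path a b).support ∧
    m ∈ (hG.path a c).support ∧ m ∈ (hG.path b c).support := by
  suffices ∀ p : G.Walk a b, p.IsPath →
      ∃ m ∈ p.support, m ∈ (hG.path a c).support ∧ m ∈ (hG.path b c).support by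
    simpa using this _ (hG.isPath_path a b)
  intro p hp
  induction p with
  | nil => exact ⟨_, Walk.start_mem_support _, Walk.start_mem_support _,
      Walk.start_mem_support _⟩
  | @cons a a' b h p ih =>
    obtain ⟨m, hmp, hmac, hmbc⟩ := ih hp.of_cons
    by_cases ha' : a' ∈ (hG.path a c).support
    · exact ⟨m, by simp [hmp], hG.support_path_subset_right ha' hmac, hmbc⟩
    have hcons : hG.path a' c = .cons h.symm (hG.path a c) :=
      (hG.eq_path ((hG.isPath_path a c).cons ha')).symm
    rw [hcons, Walk.support_cons, List.mem_cons] at hmac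
    rcases hmac with rfl | hmac
    · refine ⟨a, Walk.start_mem_support _, Walk.start_mem_support _, ?_⟩
      exact hG.support_path_subset_right hmbc (by simp [hcons])
    · exact ⟨m, by simp [hmp], hmac, hmbc⟩

end IsTree

namespace RunningIntersection

variable {L : V → Finset α} (hL : G.RunningIntersection L) {u v w z v₁ v₂ v₃ v₄ : V}
include hL

lemma of_iso {G' : SimpleGraph V'} {L' : V' → Finset α} (φ : G ≃g G')
    (hφ : ∀ v, L' (φ v) = L v) : G'.RunningIntersection L' := by
  have hL' : ∀ v, L' v = L (φ.symm v) := fun v => by rw [← hφ, φ.apply_symm_apply]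
  intro u v a hu hv p hp z hz
  rw [hL'] at hu hv ⊢
  refine hL _ _ a hu hv (p.map φ.symm.toHom) (hp.map φ.symm.injective) _ ?_
  rw [Walk.support_map]
  exact List.mem_map_of_mem hz

variable (hG : G.IsTree)
include hG

lemma mem_of_mem_path {a : α} (hu : a ∈ L u) (hv : a ∈ L v)
    (hz : z ∈ (hG.path u v).support) : a ∈ L z :=
  hL u v a hu hv _ (hG.isPath_path u v) z hz

lemma exists_inter_subset [DecidableEq α] (u v w : V) :
    ∃ m, L u ∩ L v ⊆ L m ∧ L u ∩ L w ⊆ L m ∧ L v ∩ L w ⊆ L m := by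
  obtain ⟨m, huv, huw, hvw⟩ := hG.exists_median u v w
  refine ⟨m, ?_, ?_, ?_⟩ <;> intro a ha <;> rw [Finset.mem_inter] at ha
  exacts [hL.mem_of_mem_path hG ha.1 ha.2 huv, hL.mem_of_mem_path hG ha.1 ha.2 huw,
    hL.mem_of_mem_path hG ha.1 ha.2 hvw]

/-- The median of `v₁, v₃, v₂` works: it carries `a`, so it cannot lie on the path from `v₂`
to `v₄`, all of whose vertices carry `b`. -/
lemma exists_mem_inter_subset_inter [DecidableEq α] {a b : α} (hab : ∀ z, a ∈ L z → b ∉ L z)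
    (h₁ : a ∈ L v₁) (h₃ : a ∈ L v₃) (h₂ : b ∈ L v₂) (h₄ : b ∈ L v₄) :
    ∃ u, a ∈ L u ∧ L v₁ ∩ L v₂ ⊆ L u ∧ L v₃ ∩ L v₄ ⊆ L u := by
  obtain ⟨u, h13, h12, h32⟩ := hG.exists_median v₁ v₃ v₂
  have hau : a ∈ L u := hL.mem_of_mem_path hG h₁ h₃ h13
  have h34 : u ∈ (hG.path v₃ v₄).support := by
    rcases hG.mem_path_or_mem_path v₄ h32 with h | h
    · exact h
    · exact absurd (hL.mem_of_mem_path hG h₄ h₂ h) (hab u hau)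
  refine ⟨u, hau, fun c hc => ?_, fun c hc => ?_⟩ <;> rw [Finset.mem_inter] at hc
  exacts [hL.mem_of_mem_path hG hc.1 hc.2 h12, hL.mem_of_mem_path hG hc.1 hc.2 h34]

lemma exists_adj_subset (hvw : v ≠ w) (hsub : L v ⊆ L w) : ∃ n, G.Adj v n ∧ L v ⊆ L n := by
  have hnil : ¬(hG.path v w).Nil := Walk.not_nil_of_ne hvw
  refine ⟨(hG.path v w).snd, Walk.adj_snd hnil, fun a ha => hL.mem_of_mem_path hG ha (hsub ha) ?_⟩
  exact List.mem_of_mem_tail (Walk.snd_mem_tail_support hnil)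

end RunningIntersection

end SimpleGraph

/-- A rooted tree given by parent pointers; `rank` witnesses that they lead to `root`. -/
structure ParentTree (V : Type*) where
  root : V
  parent : V → V
  rank : V → ℕ
  parent_root : parent root = root
  rank_parent_lt : ∀ v, v ≠ root → rank (parent v) < rank v

namespace ParentTree

open SimpleGraph

variable {V α : Type*} (T : ParentTree V) {L : V → Finset α} {v w : V}

def toGraph : SimpleGraph V :=
  SimpleGraph.fromRel fun v w => w = T.parent v

/-- The rooted form of the running intersection property: the vertices whose label contains
`a` are closed under `parent`, except at a single top vertex `m`. -/
def RunningIntersection (L : V → Finset α) : Prop :=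
  ∀ a, ∃ m, ∀ v, a ∈ L v → v ≠ m → v ≠ T.root ∧ a ∈ L (T.parent v)

lemma parent_ne (hv : v ≠ T.root) : T.parent v ≠ v :=
  fun h => (T.rank_parent_lt v hv).ne (congrArg T.rank h)

lemma adj_iff : T.toGraph.Adj v w ↔ v ≠ w ∧ (w = T.parent v ∨ v = T.parent w) :=
  fromRel_adj _ v w

lemma adj_parent (hv : v ≠ T.root) : T.toGraph.Adj v (T.parent v) :=
  T.adj_iff.2 ⟨(T.parent_ne hv).symm, Or.inl rfl⟩

lemma parent_induction {P : V → Prop} (h : ∀ v, (v ≠ T.root → P (T.parent v)) → P v) (v : V) :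
    P v :=
  (measure T.rank).wf.induction v fun v ih => h v fun hv => ih _ (T.rank_parent_lt v hv)

lemma rank_iterate_parent_le (n : ℕ) (v : V) : T.rank (T.parent^[n] v) ≤ T.rank v := by
  induction n with
  | zero => rfl
  | succ n ih =>
    rw [Function.iterate_succ_apply']
    refine le_trans ?_ ih
    by_cases hv : T.parent^[n] v = T.root
    · rw [hv, T.parent_root]
    · exact (T.rank_parent_lt _ hv).le

lemma reachable_root (v : V) : T.toGraph.Reachable v T.root := by
  induction v using T.parent_induction with
  | h v ih =>
    by_cases hv : v = T.root
    · rw [hv]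
    · exact (T.adj_parent hv).reachable.trans (ih hv)

lemma connected : T.toGraph.Connected :=
  (connected_iff _).2 ⟨fun u v => (T.reachable_root u).trans (T.reachable_root v).symm, ⟨T.root⟩⟩

/-- Removing the edge to the parent separates the descendants of `v` from the rest. -/
lemma isBridge_parent (hv : v ≠ T.root) : T.toGraph.IsBridge s(v, T.parent v) := by
  rw [isBridge_iff]
  rintro ⟨p⟩
  have hout : T.parent v ∉ {w | ∃ n, T.parent^[n] w = v} := by
    rintro ⟨n, hn⟩
    have := T.rank_iterate_parent_le n (T.parent v)
    rw [hn] at this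
    exact (T.rank_parent_lt v hv).not_ge this
  obtain ⟨d, -, ⟨n, hn⟩, hsnd⟩ := p.exists_boundary_dart {w | ∃ n, T.parent^[n] w = v} ⟨0, rfl⟩ hout
  obtain ⟨hadj, hd⟩ := (deleteEdges_adj ..).1 d.adj
  rcases (T.adj_iff.1 hadj).2 with h | h
  · cases n with
    | zero => exact hd (by simp_all)
    | succ n => exact hsnd ⟨n, by rwa [h, ← Function.iterate_succ_apply]⟩
  · exact hsnd ⟨n + 1, by rwa [Function.iterate_succ_apply, ← h]⟩

lemma isAcyclic : T.toGraph.IsAcyclic := by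
  refine isAcyclic_iff_forall_adj_isBridge.2 fun v w hvw => ?_
  have hroot : ∀ {v}, v ≠ T.parent v → v ≠ T.root := fun h hv => h (hv ▸ T.parent_root.symm)
  obtain ⟨hne, rfl | rfl⟩ := T.adj_iff.1 hvw
  · exact T.isBridge_parent (hroot hne)
  · rw [Sym2.eq_swap]
    exact T.isBridge_parent (hroot hne.symm)

lemma isTree : T.toGraph.IsTree :=
  ⟨T.connected, T.isAcyclic⟩

lemma exists_walk_to_top {a : α} {m : V}
    (hm : ∀ v, a ∈ L v → v ≠ m → v ≠ T.root ∧ a ∈ L (T.parent v)) (v : V) (ha : a ∈ L v) :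
    ∃ p : T.toGraph.Walk v m, ∀ z ∈ p.support, a ∈ L z := by
  induction v using T.parent_induction with
  | h v ih =>
    by_cases hvm : v = m
    · subst hvm
      exact ⟨.nil, by simpa using ha⟩
    obtain ⟨hv, hpa⟩ := hm v ha hvm
    obtain ⟨p, hp⟩ := ih hv hpa
    refine ⟨.cons (T.adj_parent hv) p, fun z hz => ?_⟩
    rcases List.mem_cons.1 (Walk.support_cons _ _ ▸ hz) with rfl | hz
    exacts [ha, hp z hz]

variable {T}

lemma RunningIntersection.toGraph (h : T.RunningIntersection L) :
    T.toGraph.RunningIntersection L := by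
  intro u v a hu hv p hp z hz
  obtain ⟨m, hm⟩ := h a
  obtain ⟨pu, hpu⟩ := T.exists_walk_to_top hm u hu
  obtain ⟨pv, hpv⟩ := T.exists_walk_to_top hm v hv
  have hz' := T.isTree.support_path_subset (pu.append pv.reverse) (T.isTree.eq_path hp ▸ hz)
  rw [Walk.mem_support_append_iff, Walk.support_reverse, List.mem_reverse] at hz'
  exact hz'.elim (hpu z) (hpv z)

variable (T) in
noncomputable def contract (v : V) (hv : v ≠ T.root) : ParentTree {u // u ≠ v} where
  root := ⟨T.root, hv.symm⟩
  parent u := if h : T.parent u = v then ⟨T.parent v, T.parent_ne hv⟩ else ⟨T.parent u, h⟩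
  rank u := T.rank u
  parent_root := by simp [T.parent_root, hv.symm]
  rank_parent_lt u hu := by
    have hu' : u.1 ≠ T.root := fun h => hu (Subtype.ext h)
    split_ifs with h
    · have hu_lt := T.rank_parent_lt u hu'
      rw [h] at hu_lt
      exact (T.rank_parent_lt v hv).trans hu_lt
    · exact T.rank_parent_lt u hu'

lemma RunningIntersection.contract (h : T.RunningIntersection L) (hv : v ≠ T.root)
    (hsub : L v ⊆ L (T.parent v)) : (T.contract v hv).RunningIntersection fun u => L u := by
  intro a
  obtain ⟨m, hm⟩ := h a
  refine ⟨if hmv : m = v then (T.contract v hv).root else ⟨m, hmv⟩, fun u ha hum => ?_⟩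
  have hum' : u.1 ≠ m := by
    split_ifs at hum with hmv
    · exact hmv ▸ u.2
    · exact fun h => hum (Subtype.ext h)
  obtain ⟨hur, hpa⟩ := hm u ha hum'
  refine ⟨fun h => hur (congrArg Subtype.val h), ?_⟩
  simp only [ParentTree.contract]
  split_ifs with hpu
  · exact hsub (hpu ▸ hpa)
  · exact hpa

variable (T)

/-- Attach a new vertex `none` below the root, and move below it the children of the root
satisfying `p`. -/
noncomputable def sprout (p : V → Prop) : ParentTree (Option V) where
  root := some T.root
  parent o := o.elim (some T.root) fun v =>
    if v ≠ T.root ∧ T.parent v = T.root ∧ p v then none else some (T.parent v)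
  rank o := o.elim (2 * T.rank T.root + 1) fun v => 2 * T.rank v
  parent_root := by simp [T.parent_root]
  rank_parent_lt
    | some v, hv => by
      have hlt := T.rank_parent_lt v fun h => hv (h ▸ rfl)
      simp only [Option.elim_some]
      split_ifs with hc
      · rw [hc.2.1] at hlt
        simp only [Option.elim_none]
        omega
      · simp only [Option.elim_some]
        omega
    | none, _ => by simp

noncomputable def sproutLabel [DecidableEq α] (L : V → Finset α) (x y : α) (o : Option V) :
    Finset α :=
  o.elim ((L T.root).erase y) fun v => if v = T.root then (L T.root).erase x else L v

variable {T}

lemma RunningIntersection.mem_parent_of_mem_root (h : T.RunningIntersection L) {a : α}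
    (ha : a ∈ L T.root) (hav : a ∈ L v) (hv : v ≠ T.root) : a ∈ L (T.parent v) := by
  obtain ⟨m, hm⟩ := h a
  obtain rfl : m = T.root := by
    by_contra hmr
    exact (hm _ ha (Ne.symm hmr)).1 rfl
  exact (hm v hav hv).2

variable [DecidableEq α] {x y : α}

lemma sproutLabel_some (hv : v ≠ T.root) : T.sproutLabel L x y (some v) = L v :=
  if_neg hv

lemma mem_sproutLabel_parent {a : α} (hv : v ≠ T.root) (hpa : a ∈ L (T.parent v))
    (hay : T.parent v = T.root → x ∈ L v → a ≠ y)
    (hax : T.parent v = T.root → x ∉ L v → a ≠ x) :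
    a ∈ T.sproutLabel L x y ((T.sprout fun v => x ∈ L v).parent (some v)) := by
  by_cases hpr : T.parent v = T.root
  · by_cases hxv : x ∈ L v
    · simpa [sprout, sproutLabel, hv, hpr, hxv, hay hpr hxv] using hpr ▸ hpa
    · simpa [sprout, sproutLabel, hpr, hxv, hax hpr hxv] using hpr ▸ hpa
  · simpa [sprout, sproutLabel, hpr] using hpa

/-- The top vertex for `x` becomes the new vertex, the top vertex for the other items of the
root's label stays the root, and all other top vertices are unchanged. -/
lemma RunningIntersection.sprout (h : T.RunningIntersection L) (hxy : x ≠ y)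
    (hx : x ∈ L T.root) (hsep : ∀ v, v ≠ T.root → x ∈ L v → y ∉ L v) :
    (T.sprout fun v => x ∈ L v).RunningIntersection (T.sproutLabel L x y) := by
  intro a
  by_cases har : a ∈ L T.root
  swap
  · obtain ⟨m, hm⟩ := h a
    refine ⟨some m, ?_⟩
    rintro (_ | v) ha hv
    · exact absurd (Finset.mem_of_mem_erase ha) har
    have hvr : v ≠ T.root := by
      rintro rfl
      exact har (Finset.mem_of_mem_erase (by simpa [sproutLabel] using ha))
    rw [sproutLabel_some hvr] at ha
    obtain ⟨-, hpa⟩ := hm v ha fun h => hv (h ▸ rfl)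
    have hpr : T.parent v ≠ T.root := fun h => har (h ▸ hpa)
    exact ⟨fun h => hvr (Option.some.inj h),
      mem_sproutLabel_parent hvr hpa (absurd · hpr) (absurd · hpr)⟩
  by_cases hax : a = x
  · subst hax
    refine ⟨none, ?_⟩
    rintro (_ | v) ha hv
    · exact absurd rfl hv
    have hvr : v ≠ T.root := by
      rintro rfl
      simp [sproutLabel] at ha
    rw [sproutLabel_some hvr] at ha
    exact ⟨fun h => hvr (Option.some.inj h), mem_sproutLabel_parent hvr
      (h.mem_parent_of_mem_root har ha hvr) (fun _ _ => hxy) (fun _ hav => absurd ha hav)⟩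
  · refine ⟨some T.root, ?_⟩
    rintro (_ | v) ha hv
    · exact ⟨Option.some_ne_none _ |>.symm, by simp [ParentTree.sprout, sproutLabel, hax, har]⟩
    have hvr : v ≠ T.root := fun h => hv (h ▸ rfl)
    rw [sproutLabel_some hvr] at ha
    exact ⟨fun h => hvr (Option.some.inj h), mem_sproutLabel_parent hvr
      (h.mem_parent_of_mem_root har ha hvr) (fun _ hxv hay => hsep v hvr hxv (hay ▸ ha))
      (fun _ _ => hax)⟩

end ParentTree

namespace SimpleGraph.IsTree

variable {V α : Type*} {G : SimpleGraph V} (hG : G.IsTree) {L : V → Finset α} {v r : V}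

noncomputable def rooting (r : V) : ParentTree V where
  root := r
  parent v := (hG.path v r).snd
  rank v := (hG.path v r).length
  parent_root := by rw [← hG.eq_path (Walk.IsPath.nil (u := r))]; rfl
  rank_parent_lt v hv := by
    have hnil : ¬(hG.path v r).Nil := Walk.not_nil_of_ne hv
    rw [← hG.eq_path (hG.isPath_path v r).tail, ← Walk.length_tail_add_one hnil]
    omega

@[simp]
lemma rooting_root (r : V) : (hG.rooting r).root = r :=
  rfl

lemma rooting_parent_of_adj (h : G.Adj v r) : (hG.rooting r).parent v = r :=
  (hG.isAcyclic.eq_snd_of_adj_start (hG.isPath_path v r) h (Walk.end_mem_support _)).symm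

lemma parent_rooting_mem_path {c : V} (hc : c ∈ (hG.path v r).support) (hcv : c ≠ v) :
    (hG.rooting r).parent v ∈ (hG.path v c).support := by
  have hnil : ¬(hG.path v c).Nil := Walk.not_nil_of_ne hcv.symm
  have hsnd := hG.isAcyclic.eq_snd_of_adj_start (hG.isPath_path v r) (Walk.adj_snd hnil)
    (hG.support_path_subset_left hc (List.mem_of_mem_tail (Walk.snd_mem_tail_support hnil)))
  change (hG.path v r).snd ∈ _
  rw [← hsnd]
  exact List.mem_of_mem_tail (Walk.snd_mem_tail_support hnil)

end SimpleGraph.IsTree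

namespace SimpleGraph.RunningIntersection

variable {V α : Type*} {G : SimpleGraph V} (hG : G.IsTree) {L : V → Finset α}

/-- The top vertex for an item `a` is the vertex carrying `a` that is closest to `r`. -/
lemma rooting (hL : G.RunningIntersection L) (r : V) :
    (hG.rooting r).RunningIntersection L := by
  intro a
  by_cases hne : {v | a ∈ L v}.Nonempty
  swap
  · exact ⟨r, fun v hv => absurd ⟨v, hv⟩ hne⟩
  obtain ⟨m, ham, hmin⟩ :=
    (InvImage.wf (fun v => (hG.path v r).length) wellFounded_lt).has_min _ hne
  refine ⟨m, fun j haj hjm => ?_⟩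
  obtain ⟨c, hcjm, hcjr, hcmr⟩ := hG.exists_median j m r
  have hcj : c ≠ j := by
    rintro rfl
    have hsplit := hG.length_path_add hcmr
    have hle : (hG.path m r).length ≤ (hG.path c r).length := not_lt.1 (hmin c haj)
    have hmc : (hG.path m c).length = 0 := by omega
    exact hjm (Walk.eq_of_length_eq_zero hmc).symm
  have hjr : j ≠ r := by
    rintro rfl
    rw [← hG.eq_path (Walk.IsPath.nil (u := j))] at hcjr
    exact hcj (by simpa using hcjr)
  exact ⟨hjr, hL.mem_of_mem_path hG haj ham
    (hG.support_path_subset_left hcjm (hG.parent_rooting_mem_path hcjr hcj))⟩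

end SimpleGraph.RunningIntersection

section Itemsets

/-- The paper's `split(X, x, y)`, which does not depend on `X`. -/
def split (F : Finset (Finset A)) (x y : A) : Finset (Finset A) :=
  F.filter fun Z => ¬(x ∈ Z ∧ y ∈ Z)

open SimpleGraph

variable {F : Finset (Finset A)} {X Y M Z : Finset A}

lemma mem_maximalSets : M ∈ maximalSets F ↔ M ∈ F ∧ ∀ Y ∈ F, M ⊆ Y → M = Y :=
  Finset.mem_filter

lemma eq_of_mem_maximalSets_of_subset (hM : M ∈ maximalSets F) (hZ : Z ∈ F) (h : M ⊆ Z) :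
    M = Z :=
  (mem_maximalSets.1 hM).2 Z hZ h

lemma decomposable_iff : Decomposable F ↔
    ∃ G : SimpleGraph {M // M ∈ maximalSets F}, G.IsTree ∧ G.RunningIntersection Subtype.val :=
  Iff.rfl

lemma exists_mem_maximalSets_superset (hZ : Z ∈ F) : ∃ M ∈ maximalSets F, Z ⊆ M := by
  obtain ⟨M, hZM, hM, hmax⟩ := F.exists_le_maximal hZ
  exact ⟨M, mem_maximalSets.2 ⟨hM, fun Y hY hMY => le_antisymm hMY (hmax hY hMY)⟩, hZM⟩

theorem decomposable_of_labelled_tree {V : Type*} [Finite V] {G : SimpleGraph V}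
    {L : V → Finset A} (hG : G.IsTree) (hL : G.RunningIntersection L) (hLF : ∀ v, L v ∈ F)
    (hcover : ∀ M ∈ maximalSets F, ∃ v, L v = M) : Decomposable F := by
  induction hn : Nat.card V using Nat.strong_induction_on generalizing V with
  | _ n ih =>
  by_cases hgood : ∀ v, L v ∈ maximalSets F ∧ ∀ w, L w = L v → w = v
  · let e : V ≃ {M // M ∈ maximalSets F} := Equiv.ofBijective (fun v => ⟨L v, (hgood v).1⟩)
      ⟨fun v w h => (hgood w).2 v (congrArg Subtype.val h),
        fun M => (hcover M.1 M.2).imp fun v hv => Subtype.ext hv⟩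
    exact decomposable_iff.2 ⟨G.map e.toEmbedding, (Iso.map e G).isTree_iff.1 hG,
      hL.of_iso (Iso.map e G) fun v => rfl⟩
  push Not at hgood
  obtain ⟨v, hv⟩ := hgood
  have hcover' : ∀ M ∈ maximalSets F, ∃ u : {u // u ≠ v}, L u = M := by
    intro M hM
    obtain ⟨u, hu⟩ := hcover M hM
    by_cases huv : u = v
    · subst huv
      obtain ⟨w, hwL, hwv⟩ := hv (hu ▸ hM)
      exact ⟨⟨w, hwv⟩, hwL.trans hu⟩
    · exact ⟨⟨u, huv⟩, hu⟩
  obtain ⟨W, hW, hvW⟩ := exists_mem_maximalSets_superset (hLF v)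
  obtain ⟨⟨w, hwv⟩, rfl⟩ := hcover' W hW
  obtain ⟨r, hadj, hvr⟩ := hL.exists_adj_subset hG (Ne.symm hwv) hvW
  have hparent : (hG.rooting r).parent v = r := hG.rooting_parent_of_adj hadj
  let T := (hG.rooting r).contract v hadj.ne
  have hT : T.RunningIntersection fun u => L u :=
    (hL.rooting hG r).contract hadj.ne (by rwa [hparent])
  exact ih _ (hn ▸ Finite.card_subtype_lt (x := v) (by simp)) T.isTree hT.toGraph
    (fun u => hLF u) hcover' rfl

lemma erase_union_not_mem (hF : Decomposable F) (hX : X ∈ maximalSets F)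
    (hY : Y ∈ maximalSets F) (hXY : X ≠ Y) {x : A} (hxX : x ∈ X) (hxY : x ∈ Y) :
    (X ∪ Y).erase x ∉ F := by
  intro hZ
  obtain ⟨W, hW, hZW⟩ := exists_mem_maximalSets_superset hZ
  obtain ⟨G, hG, hL⟩ := decomposable_iff.1 hF
  obtain ⟨m, hXYm, hXWm, hYWm⟩ := hL.exists_inter_subset hG ⟨X, hX⟩ ⟨Y, hY⟩ ⟨W, hW⟩
  have hmF : m.1 ∈ F := (mem_maximalSets.1 m.2).1
  have hXm : X ⊆ m.1 := fun a ha => by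
    by_cases hax : a = x
    · exact hXYm (Finset.mem_inter.2 ⟨ha, hax ▸ hxY⟩)
    · exact hXWm (Finset.mem_inter.2 ⟨ha, hZW (by simp [hax, ha])⟩)
  have hYm : Y ⊆ m.1 := fun a ha => by
    by_cases hax : a = x
    · exact hXYm (Finset.mem_inter.2 ⟨hax ▸ hxX, ha⟩)
    · exact hYWm (Finset.mem_inter.2 ⟨ha, hZW (by simp [hax, ha])⟩)
  exact hXY ((eq_of_mem_maximalSets_of_subset hX hmF hXm).trans
    (eq_of_mem_maximalSets_of_subset hY hmF hYm).symm)

variable {x y : A}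

omit [Fintype A] in
lemma mem_split : Z ∈ split F x y ↔ Z ∈ F ∧ ¬(x ∈ Z ∧ y ∈ Z) :=
  Finset.mem_filter

omit [Fintype A] in
lemma erase_mem_split (hdc : DownwardClosed F) (hZ : Z ∈ F) (x y : A) :
    Z.erase x ∈ split F x y ∧ Z.erase y ∈ split F x y :=
  ⟨mem_split.2 ⟨hdc Z hZ _ (Finset.erase_subset x Z), by simp⟩,
    mem_split.2 ⟨hdc Z hZ _ (Finset.erase_subset y Z), by simp⟩⟩

lemma eq_of_decomposable_split (hdc : DownwardClosed F) (hF : Decomposable F)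
    (hX : X ∈ maximalSets F) (hx : x ∈ X) (hy : y ∈ X) (hxy : x ≠ y)
    (hsplit : Decomposable (split F x y))
    (hY : Y ∈ maximalSets F) (hxY : x ∈ Y) (hyY : y ∈ Y) : Y = X := by
  by_contra hYX
  have hXF := (mem_maximalSets.1 hX).1
  have hYF := (mem_maximalSets.1 hY).1
  obtain ⟨M₁, hM₁, h₁⟩ := exists_mem_maximalSets_superset (erase_mem_split hdc hXF x y).1
  obtain ⟨M₂, hM₂, h₂⟩ := exists_mem_maximalSets_superset (erase_mem_split hdc hXF x y).2
  obtain ⟨M₃, hM₃, h₃⟩ := exists_mem_maximalSets_superset (erase_mem_split hdc hYF x y).1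
  obtain ⟨M₄, hM₄, h₄⟩ := exists_mem_maximalSets_superset (erase_mem_split hdc hYF x y).2
  obtain ⟨G, hG, hL⟩ := decomposable_iff.1 hsplit
  have hsep : ∀ v : {M // M ∈ maximalSets (split F x y)}, y ∈ v.1 → x ∉ v.1 :=
    fun v hyv hxv => (mem_split.1 (mem_maximalSets.1 v.2).1).2 ⟨hxv, hyv⟩
  obtain ⟨u, hyu, hu₁₂, hu₃₄⟩ := hL.exists_mem_inter_subset_inter hG hsep
    (v₁ := ⟨M₁, hM₁⟩) (v₂ := ⟨M₂, hM₂⟩) (v₃ := ⟨M₃, hM₃⟩) (v₄ := ⟨M₄, hM₄⟩)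
    (h₁ (by simp [hy, Ne.symm hxy])) (h₃ (by simp [hyY, Ne.symm hxy]))
    (h₂ (by simp [hx, hxy])) (h₄ (by simp [hxY, hxy]))
  have hsub : (X ∪ Y).erase x ⊆ u.1 := by
    intro a ha
    obtain ⟨hax, haXY⟩ := Finset.mem_erase.1 ha
    by_cases hay : a = y
    · exact hay ▸ hyu
    rcases Finset.mem_union.1 haXY with haX | haY
    · exact hu₁₂ (Finset.mem_inter.2 ⟨h₁ (by simp [hax, haX]), h₂ (by simp [hay, haX])⟩)
    · exact hu₃₄ (Finset.mem_inter.2 ⟨h₃ (by simp [hax, haY]), h₄ (by simp [hay, haY])⟩)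
  have huF : u.1 ∈ F := (mem_split.1 (mem_maximalSets.1 u.2).1).1
  exact erase_union_not_mem hF hX hY (Ne.symm hYX) hx hxY (hdc _ huF _ hsub)

lemma mem_maximalSets_split (hdc : DownwardClosed F) (hX : X ∈ maximalSets F)
    (huniq : ∀ Y ∈ maximalSets F, x ∈ Y → y ∈ Y → Y = X) (hM : M ∈ maximalSets (split F x y)) :
    M = X.erase x ∨ M = X.erase y ∨ (M ∈ maximalSets F ∧ M ≠ X) := by
  have hXF := (mem_maximalSets.1 hX).1
  obtain ⟨hMF, hMxy⟩ := mem_split.1 (mem_maximalSets.1 hM).1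
  obtain ⟨W, hW, hMW⟩ := exists_mem_maximalSets_superset hMF
  by_cases hWX : W = X
  · rw [hWX] at hMW
    by_cases hxM : x ∈ M
    · refine Or.inr (Or.inl (eq_of_mem_maximalSets_of_subset hM (erase_mem_split hdc hXF x y).2
        (Finset.subset_erase.2 ⟨hMW, fun hyM => hMxy ⟨hxM, hyM⟩⟩)))
    · exact Or.inl (eq_of_mem_maximalSets_of_subset hM (erase_mem_split hdc hXF x y).1
        (Finset.subset_erase.2 ⟨hMW, hxM⟩))
  · have hWs : W ∈ split F x y :=
      mem_split.2 ⟨(mem_maximalSets.1 hW).1, fun h => hWX (huniq W hW h.1 h.2)⟩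
    obtain rfl := eq_of_mem_maximalSets_of_subset hM hWs hMW
    exact Or.inr (Or.inr ⟨hW, hWX⟩)

lemma decomposable_split (hdc : DownwardClosed F) (hF : Decomposable F)
    (hX : X ∈ maximalSets F) (hx : x ∈ X) (hxy : x ≠ y)
    (huniq : ∀ Y ∈ maximalSets F, x ∈ Y → y ∈ Y → Y = X) : Decomposable (split F x y) := by
  obtain ⟨G, hG, hL⟩ := decomposable_iff.1 hF
  have hXF := (mem_maximalSets.1 hX).1
  let r : {M // M ∈ maximalSets F} := ⟨X, hX⟩
  have hsep : ∀ v, v ≠ r → x ∈ v.1 → y ∉ v.1 :=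
    fun v hv hxv hyv => hv (Subtype.ext (huniq v.1 v.2 hxv hyv))
  let T := (hG.rooting r).sprout fun v => x ∈ v.1
  have hT := (hL.rooting hG r).sprout hxy hx hsep
  refine decomposable_of_labelled_tree T.isTree hT.toGraph ?_ ?_
  · rintro (_ | v)
    · exact (erase_mem_split hdc hXF x y).2
    by_cases hvr : v = r
    · simpa [ParentTree.sproutLabel, hvr] using (erase_mem_split hdc hXF x y).1
    · simpa [ParentTree.sproutLabel, hvr] using
        mem_split.2 ⟨(mem_maximalSets.1 v.2).1, fun h => hsep v hvr h.1 h.2⟩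
  intro M hM
  rcases mem_maximalSets_split hdc hX huniq hM with rfl | rfl | ⟨hM', hMX⟩
  · exact ⟨some r, by simp [ParentTree.sproutLabel, r]⟩
  · exact ⟨none, rfl⟩
  · have hMr : (⟨M, hM'⟩ : {M // M ∈ maximalSets F}) ≠ r := fun h => hMX (congrArg Subtype.val h)
    exact ⟨some ⟨M, hM'⟩, by simp [ParentTree.sproutLabel, hMr]⟩

end Itemsets

/-- Theorem (split legality): for a decomposable family `F`, a maximal itemset `X` and
distinct `x, y ∈ X`, the family obtained by the split operation `split(X,x,y)` (deleting
every itemset containing both `x` and `y`) is decomposable if and only if `X` is the only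
maximal itemset of `F` containing both `x` and `y`. -/
theorem split_legal (F : Finset (Finset A)) (hdc : DownwardClosed F) (hF : Decomposable F)
    (X : Finset A) (hX : X ∈ maximalSets F) (x y : A)
    (hx : x ∈ X) (hy : y ∈ X) (hxy : x ≠ y) :
    Decomposable (F.filter fun Z => ¬(x ∈ Z ∧ y ∈ Z)) ↔
      ∀ Y ∈ maximalSets F, x ∈ Y → y ∈ Y → Y = X :=
  ⟨fun hsplit _ hY hxY hyY => eq_of_decomposable_split hdc hF hX hx hy hxy hsplit hY hxY hyY,
    decomposable_split hdc hF hX hx hxy⟩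
end

section
/- In any junction tree of a decomposable family F, if a leaf node X has |X| ≥ 2, then there exists an item x ∈ X that is not contained in any other maximal itemset of F. -/
open scoped Classical

variable {A : Type*} [Fintype A] [DecidableEq A]

/-!
By the running intersection property, an item shared by a node `X` and any other node lies
in the second vertex of the path between them, i.e. in a neighbour of `X`. A leaf has at most
one neighbour `W`, and `X ⊄ W` by maximality, so an item of `X \ W` is private to `X`; a leaf
without neighbours is the whole tree, and any item of `X` will do.
-/

theorem not_subset_of_mem_maximalSets {F : Finset (Finset A)} {X Y : Finset A}
    (hX : X ∈ maximalSets F) (hY : Y ∈ maximalSets F) (hne : X ≠ Y) : ¬ X ⊆ Y :=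
  fun hsub => hne ((Finset.mem_filter.mp hX).2 Y (Finset.mem_filter.mp hY).1 hsub)

theorem IsJunctionTree.exists_adj_mem_of_mem {F : Finset (Finset A)}
    {G : SimpleGraph {X // X ∈ maximalSets F}} (hG : IsJunctionTree F G)
    {X Y : {X // X ∈ maximalSets F}} (hne : X ≠ Y) {a : A} (haX : a ∈ X.1) (haY : a ∈ Y.1) :
    ∃ W, G.Adj X W ∧ a ∈ W.1 := by
  obtain ⟨p, hp⟩ := hG.1.connected.preconnected.exists_isPath X Y
  have hnil : ¬ p.Nil := SimpleGraph.Walk.not_nil_of_ne hne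
  exact ⟨p.snd, p.adj_snd hnil, hG.2 X Y a haX haY p hp _ (p.getVert_mem_support 1)⟩

theorem exists_mem_forall_adj_not_mem {F : Finset (Finset A)}
    {G : SimpleGraph {X // X ∈ maximalSets F}} {X : {X // X ∈ maximalSets F}}
    (hleaf : ∀ Y Z, G.Adj X Y → G.Adj X Z → Y = Z) (hX : X.1.Nonempty) :
    ∃ x ∈ X.1, ∀ W, G.Adj X W → x ∉ W.1 := by
  by_cases hnbr : ∃ W, G.Adj X W
  · obtain ⟨W₀, hW₀⟩ := hnbr
    have hne : X.1 ≠ W₀.1 := fun h => G.ne_of_adj hW₀ (Subtype.ext h)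
    obtain ⟨x, hxX, hxW₀⟩ := Finset.not_subset.mp (not_subset_of_mem_maximalSets X.2 W₀.2 hne)
    exact ⟨x, hxX, fun W hW => hleaf W₀ W hW₀ hW ▸ hxW₀⟩
  · simp only [not_exists] at hnbr
    obtain ⟨x, hxX⟩ := hX
    exact ⟨x, hxX, fun W hW => absurd hW (hnbr W)⟩

theorem leaf_has_private_item_general (F : Finset (Finset A))
    (G : SimpleGraph {X // X ∈ maximalSets F}) (hG : IsJunctionTree F G)
    (X : {X // X ∈ maximalSets F})
    (hleaf : ∀ Y Z, G.Adj X Y → G.Adj X Z → Y = Z)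
    (hcard : 2 ≤ X.1.card) :
    ∃ x ∈ X.1, ∀ Y ∈ maximalSets F, Y ≠ X.1 → x ∉ Y := by
  obtain ⟨x, hxX, hx⟩ :=
    exists_mem_forall_adj_not_mem hleaf (Finset.card_pos.mp (by omega))
  refine ⟨x, hxX, fun Y hY hne hxY => ?_⟩
  have hXY : X ≠ ⟨Y, hY⟩ := fun h => hne (congrArg Subtype.val h).symm
  obtain ⟨W, hW, hxW⟩ := hG.exists_adj_mem_of_mem hXY hxX hxY
  exact hx W hW hxW

/-- In any junction tree of a decomposable family `F`, a leaf node `X` (degree at most 1)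
with `|X| ≥ 2` contains an item `x` belonging to no other maximal itemset of `F`. -/
theorem leaf_has_private_item (F : Finset (Finset A)) (hdc : DownwardClosed F)
    (G : SimpleGraph {X // X ∈ maximalSets F}) (hG : IsJunctionTree F G)
    (X : {X // X ∈ maximalSets F})
    (hleaf : ∀ Y Z, G.Adj X Y → G.Adj X Z → Y = Z)
    (hcard : 2 ≤ X.1.card) :
    ∃ x ∈ X.1, ∀ Y ∈ maximalSets F, Y ≠ X.1 → x ∉ Y :=
  leaf_has_private_item_general F G hG X hleaf hcard
end
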